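/- arXiv:1309.1914 — 2 statements merged into one kernel-verified Lean document; each statement's English description precedes it below -/
import Mathlib

section
/- Let λ₁,…,λ_s be complex numbers of modulus 1. Define the group of multiplicative relations L = { v ∈ ℤ^s : λ₁^{v₁}⋯λ_s^{v_s} = 1 } and the subgroup T = { μ ∈ 𝕋^s : μ₁^{v₁}⋯μ_s^{v_s} = 1 for all v ∈ L } of the torus 𝕋^s = {z ∈ ℂ : |z|=1}^s. Then the orbit S = { (λ₁ⁿ,…,λ_sⁿ) : n ∈ ℕ } is a dense subset of T. -/
/-!
The closure `H` of the orbit of `λ` is a closed subgroup of the compact torus (in a compact group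
the closure of `{λⁿ : n ∈ ℕ}` is that of `{λⁿ : n ∈ ℤ}`), and every character `z ↦ ∏ zᵢ ^ wᵢ`
trivial at `λ` is trivial on `H`. Conversely, let `μ` be killed by all such characters and let `P`
be the Haar measure of `H`, viewed on the torus. The `P`-integral of a character vanishes unless
the character is trivial on `H`, in which case it is trivial at `μ`; so `P` and its translate by
`μ` have the same Fourier coefficients. Characters span a point-separating star-subalgebra, so the
two measures agree. As `P` is carried by `H` and its translate by `Hμ`, these cosets meet and
`μ ∈ H`.
-/
open MeasureTheory Set BoundedContinuousFunction

variable {ι : Type*} [Fintype ι]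

noncomputable def torusChar (w : ι → ℤ) : (ι → Circle) →* Circle :=
  ∏ i, (zpowGroupHom (w i)).comp (Pi.evalMonoidHom (fun _ => Circle) i)

lemma torusChar_apply (w : ι → ℤ) (z : ι → Circle) : torusChar w z = ∏ i, z i ^ w i := by
  simp [torusChar, MonoidHom.finsetProd_apply]

lemma coe_torusChar (w : ι → ℤ) (z : ι → Circle) :
    (torusChar w z : ℂ) = ∏ i, (z i : ℂ) ^ w i := by
  rw [torusChar_apply]
  exact (map_prod Circle.coeHom _ _).trans (Finset.prod_congr rfl fun i _ => Circle.coe_zpow _ _)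

lemma continuous_torusChar (w : ι → ℤ) : Continuous (torusChar w) := by
  simp only [funext (torusChar_apply w)]
  fun_prop

lemma torusChar_add (v w : ι → ℤ) (z : ι → Circle) :
    torusChar (v + w) z = torusChar v z * torusChar w z := by
  simp [torusChar_apply, zpow_add, Finset.prod_mul_distrib]

lemma torusChar_neg (w : ι → ℤ) (z : ι → Circle) : torusChar (-w) z = (torusChar w z)⁻¹ := by
  simp [torusChar_apply]

lemma torusChar_zero (z : ι → Circle) : torusChar 0 z = 1 := by
  simp [torusChar_apply]

lemma torusChar_single [DecidableEq ι] (i : ι) (z : ι → Circle) :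
    torusChar (Pi.single i 1) z = z i := by
  rw [torusChar_apply, Finset.prod_eq_single i] <;> simp +contextual

lemma integral_eq_zero_of_map_ne_one {G : Type*} [Group G] [MeasurableSpace G] [MeasurableMul G]
    (ν : Measure G) [ν.IsMulLeftInvariant] (φ : G →* ℂ) {g : G} (hg : φ g ≠ 1) :
    ∫ x, φ x ∂ν = 0 := by
  have h := integral_mul_left_eq_self (μ := ν) (fun x => φ x) g
  simp only [map_mul, integral_const_mul] at h
  by_contra h0
  exact hg ((mul_eq_right₀ h0).mp h)

noncomputable def torusFourier (w : ι → ℤ) : (ι → Circle) →ᵇ ℂ :=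
  .mkOfCompact ⟨fun z => torusChar w z, continuous_subtype_val.comp (continuous_torusChar w)⟩

@[simp]
lemma torusFourier_apply (w : ι → ℤ) (z : ι → Circle) : torusFourier w z = torusChar w z := rfl

lemma torusFourier_add (v w : ι → ℤ) : torusFourier (v + w) = torusFourier v * torusFourier w := by
  ext z
  simp [torusChar_add]

lemma torusFourier_zero : torusFourier (0 : ι → ℤ) = 1 := by
  ext z
  simp [torusChar_zero]

lemma star_torusFourier (w : ι → ℤ) : star (torusFourier w) = torusFourier (-w) := by
  ext z
  simp [torusChar_neg, ← Circle.coe_inv_eq_conj]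

noncomputable def torusFourierAlgebra (ι : Type*) [Fintype ι] :
    StarSubalgebra ℂ ((ι → Circle) →ᵇ ℂ) :=
  StarAlgebra.adjoin ℂ (range torusFourier)

lemma torusFourierAlgebra_toSubmodule :
    (torusFourierAlgebra ι).toSubalgebra.toSubmodule = Submodule.span ℂ (range torusFourier) := by
  rw [torusFourierAlgebra, StarAlgebra.adjoin_eq_span]
  congr 1
  refine subset_antisymm (fun f hf => ?_) (Submonoid.subset_closure.trans' subset_union_left)
  induction hf using Submonoid.closure_induction with
  | mem f hf =>
    rcases hf with ⟨w, rfl⟩ | ⟨w, hw⟩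
    · exact ⟨w, rfl⟩
    · exact ⟨-w, by rw [← star_torusFourier, hw, star_star]⟩
  | one => exact ⟨0, torusFourier_zero⟩
  | mul _ _ _ _ hf hg =>
    obtain ⟨⟨v, rfl⟩, ⟨w, rfl⟩⟩ := And.intro hf hg
    exact ⟨v + w, torusFourier_add v w⟩

lemma torusFourierAlgebra_separatesPoints :
    ((torusFourierAlgebra ι).map (toContinuousMapStarₐ ℂ)).SeparatesPoints := by
  classical
  intro x y hxy
  obtain ⟨i, hi⟩ := Function.ne_iff.mp hxy
  refine ⟨_, ⟨_, ⟨torusFourier (Pi.single i 1), StarAlgebra.subset_adjoin ℂ _ ⟨_, rfl⟩, rfl⟩,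
    rfl⟩, ?_⟩
  simpa [torusChar_single, Circle.coe_inj] using hi

lemma ext_of_integral_torusChar_eq [MeasurableSpace (ι → Circle)] [BorelSpace (ι → Circle)]
    {P P' : Measure (ι → Circle)} [IsFiniteMeasure P] [IsFiniteMeasure P']
    (h : ∀ w, ∫ z, (torusChar w z : ℂ) ∂P = ∫ z, (torusChar w z : ℂ) ∂P') : P = P' := by
  refine ext_of_forall_mem_subalgebra_integral_eq_of_polish
    torusFourierAlgebra_separatesPoints fun g hg => ?_
  rw [← StarSubalgebra.mem_toSubalgebra, ← Subalgebra.mem_toSubmodule,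
    torusFourierAlgebra_toSubmodule] at hg
  induction hg using Submodule.span_induction with
  | mem g hg =>
    obtain ⟨w, rfl⟩ := hg
    exact h w
  | zero => simp
  | add f g _ _ hf hg =>
    simp only [coe_add, Pi.add_apply]
    rw [integral_add (f.integrable P) (g.integrable P), integral_add (f.integrable P')
      (g.integrable P'), hf, hg]
  | smul c f _ hf =>
    simp only [BoundedContinuousFunction.coe_smul, integral_smul, hf]

lemma map_mul_right_map_subtype_eq_self [MeasurableSpace (ι → Circle)] [BorelSpace (ι → Circle)]
    {H : Subgroup (ι → Circle)} (hH : IsClosed (H : Set (ι → Circle))) (ν : Measure H)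
    [IsFiniteMeasure ν] [ν.IsMulLeftInvariant] {μ : ι → Circle}
    (hμ : ∀ w, (∀ x ∈ H, torusChar w x = 1) → torusChar w μ = 1) :
    (ν.map (↑)).map (· * μ) = ν.map (↑) := by
  have hval : MeasurableEmbedding ((↑) : H → ι → Circle) :=
    MeasurableEmbedding.subtype_coe hH.measurableSet
  refine ext_of_integral_torusChar_eq fun w => ?_
  have hχ : Continuous fun z => (torusChar w z : ℂ) :=
    continuous_subtype_val.comp (continuous_torusChar w)
  rw [integral_map (by fun_prop) hχ.aestronglyMeasurable, hval.integral_map, hval.integral_map]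
  simp only [map_mul, Circle.coe_mul, integral_mul_const]
  by_cases htrivial : ∀ x ∈ H, torusChar w x = 1
  · rw [hμ w htrivial, Circle.coe_one, mul_one]
  · obtain ⟨x, hx, hx1⟩ := not_forall₂.mp htrivial
    have hzero : ∫ a : H, (torusChar w a : ℂ) ∂ν = 0 :=
      integral_eq_zero_of_map_ne_one ν (Circle.coeHom.comp ((torusChar w).comp H.subtype))
        (g := ⟨x, hx⟩) (fun h => hx1 (Circle.coe_eq_one.mp h))
    rw [hzero, zero_mul]

theorem mem_of_forall_torusChar_eq_one {H : Subgroup (ι → Circle)}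
    (hH : IsClosed (H : Set (ι → Circle))) {μ : ι → Circle}
    (hμ : ∀ w, (∀ x ∈ H, torusChar w x = 1) → torusChar w μ = 1) : μ ∈ H := by
  by_contra hμH
  let : MeasurableSpace (ι → Circle) := borel _
  have : BorelSpace (ι → Circle) := ⟨rfl⟩
  have : CompactSpace H := isCompact_iff_compactSpace.mp hH.isCompact
  let ν : Measure H := Measure.haar
  have hval : MeasurableEmbedding ((↑) : H → ι → Circle) :=
    MeasurableEmbedding.subtype_coe hH.measurableSet
  have hH_full : ν.map (↑) (H : Set (ι → Circle)) = ν univ := by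
    rw [hval.map_apply, Subtype.coe_preimage_self]
  have hH_null : (ν.map (↑)).map (· * μ) (H : Set (ι → Circle)) = 0 := by
    rw [Measure.map_apply (by fun_prop) hH.measurableSet, hval.map_apply]
    convert measure_empty (μ := ν)
    ext x
    simpa using fun h => hμH (by simpa using H.mul_mem (H.inv_mem x.2) h)
  rw [map_mul_right_map_subtype_eq_self hH ν hμ, hH_full] at hH_null
  exact (Measure.measure_univ_pos.mpr (NeZero.ne ν)).ne' hH_null

theorem closure_range_pow_eq_setOf_torusChar (l : ι → Circle) :
    closure (range (l ^ · : ℕ → ι → Circle)) =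
      {μ | ∀ w, torusChar w l = 1 → torusChar w μ = 1} := by
  rw [← closure_range_zpow_eq_pow, ← Subgroup.coe_zpowers, ← Subgroup.topologicalClosure_coe]
  ext μ
  refine ⟨fun hμ w hw => ?_, fun hμ => ?_⟩
  · have hker : IsClosed ((torusChar w).ker : Set (ι → Circle)) :=
      isClosed_eq (continuous_torusChar w) continuous_const
    exact Subgroup.topologicalClosure_minimal _ (Subgroup.zpowers_le.mpr hw) hker hμ
  · refine mem_of_forall_torusChar_eq_one (Subgroup.isClosed_topologicalClosure _) fun w hw => ?_
    exact hμ w (hw l (Subgroup.le_topologicalClosure _ (Subgroup.mem_zpowers l)))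

theorem orbit_dense_in_relation_torus (s : ℕ) (lam : Fin s → ℂ)
    (hlam : ∀ i, ‖lam i‖ = 1) :
    closure {z : Fin s → ℂ | ∃ n : ℕ, z = fun i => lam i ^ n} =
      {μ : Fin s → ℂ | (∀ i, ‖μ i‖ = 1) ∧
        ∀ v : Fin s → ℤ, (∏ i, lam i ^ v i) = 1 → (∏ i, μ i ^ v i) = 1} := by
  let l : Fin s → Circle := fun i => ⟨lam i, mem_sphere_zero_iff_norm.mpr (hlam i)⟩
  let e : (Fin s → Circle) → Fin s → ℂ := fun z i => z i
  have he : Topology.IsClosedEmbedding e :=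
    .piMap fun _ => (Metric.isClosed_sphere (x := (0 : ℂ)) (ε := 1)).isClosedEmbedding_subtypeVal
  have horbit : {z : Fin s → ℂ | ∃ n : ℕ, z = fun i => lam i ^ n} =
      e '' range (l ^ · : ℕ → Fin s → Circle) := by
    ext z
    simp only [mem_ofPred_eq, mem_image, mem_range, exists_exists_eq_and]
    exact exists_congr fun n => eq_comm
  have hrel : {μ : Fin s → ℂ | (∀ i, ‖μ i‖ = 1) ∧
      ∀ v : Fin s → ℤ, (∏ i, lam i ^ v i) = 1 → (∏ i, μ i ^ v i) = 1} =
      e '' {μ | ∀ w, torusChar w l = 1 → torusChar w μ = 1} := by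
    simp only [← Circle.coe_eq_one, coe_torusChar]
    ext μ
    refine ⟨fun ⟨hμ, hrel⟩ => ⟨fun i => ⟨μ i, mem_sphere_zero_iff_norm.mpr (hμ i)⟩, hrel, rfl⟩, ?_⟩
    rintro ⟨μ, hμ, rfl⟩
    exact ⟨fun i => Circle.norm_coe (μ i), hμ⟩
  rw [horbit, he.closure_image_eq, closure_range_pow_eq_setOf_torusChar, hrel]
end

section
/- Let θ₁,…,θ_s and ψ₁,…,ψ_s be real numbers such that for all integers u₁,…,u_s, if u₁θ₁+…+u_sθ_s ∈ ℤ then u₁ψ₁+…+u_sψ_s ∈ ℤ. Then for every ε > 0 there exist integers p₁,…,p_s and a natural number n such that |nθ_i − p_i − ψ_i| ≤ ε for all i = 1,…,s. -/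
/-!
A closed subgroup `H` of a finite-dimensional real space is the sum of the largest subspace `V`
it contains and of the discrete group `H ∩ W`, where `W` is a complement of `V`; a discrete group
is a lattice in its span. Hence every point outside `H` is separated from `H` by a linear form
taking integer values on `H`. For `H` the closure of `ℤθ + ℤ^s`, the hypothesis rules out such a
form at `ψ`, so `ψ` is approximated by `nθ - p` with `n ∈ ℤ`. Adding to `n` a large return time
`N ∈ ℕ` of `θ` modulo `ℤ^s`, found by compactness of the unit cube, makes it nonnegative.
-/

open Filter Topology Submodule

namespace AddSubgroup

variable {E : Type*} [NormedAddCommGroup E] [NormedSpace ℝ E]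

/-- The largest `ℝ`-subspace contained in `H`. -/
def lineality (H : AddSubgroup E) : Submodule ℝ E where
  carrier := {x | ∀ t : ℝ, t • x ∈ H}
  add_mem' hx hy t := by simpa only [smul_add] using H.add_mem (hx t) (hy t)
  zero_mem' t := by simpa only [smul_zero] using H.zero_mem
  smul_mem' c x hx t := by simpa only [smul_smul] using hx (t * c)

theorem mem_of_mem_lineality {H : AddSubgroup E} {x : E} (hx : x ∈ H.lineality) : x ∈ H := by
  simpa using hx 1

theorem mem_lineality_of_tendsto_normalize {H : AddSubgroup E} (hH : IsClosed (H : Set E))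
    {x : ℕ → E} {u : E} (hxH : ∀ k, x k ∈ H) (hx0 : ∀ k, x k ≠ 0)
    (hx : Tendsto x atTop (𝓝 0)) (hu : Tendsto (fun k ↦ ‖x k‖⁻¹ • x k) atTop (𝓝 u)) :
    u ∈ H.lineality := by
  intro t
  have hr : ∀ k, 0 < ‖x k‖ := fun k ↦ norm_pos_iff.2 (hx0 k)
  have hscal : Tendsto (fun k ↦ (⌊t / ‖x k‖⌋ : ℝ) * ‖x k‖) atTop (𝓝 t) := by
    rw [tendsto_iff_norm_sub_tendsto_zero]
    refine squeeze_zero (fun _ ↦ norm_nonneg _) (fun k ↦ ?_) (tendsto_norm_zero.comp hx)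
    rw [norm_sub_rev, Real.norm_eq_abs, abs_of_nonneg (Int.sub_floor_div_mul_nonneg t (hr k))]
    exact (Int.sub_floor_div_mul_lt t (hr k)).le
  have hlim : Tendsto (fun k ↦ ⌊t / ‖x k‖⌋ • x k) atTop (𝓝 (t • u)) := by
    refine (hscal.smul hu).congr fun k ↦ ?_
    rw [smul_smul, mul_assoc, mul_inv_cancel₀ (hr k).ne', mul_one, Int.cast_smul_eq_zsmul]
  exact hH.mem_of_tendsto hlim (Eventually.of_forall fun k ↦ H.zsmul_mem (hxH k) _)

theorem exists_forall_mem_norm_lt_eq_zero [FiniteDimensional ℝ E] {H : AddSubgroup E}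
    (hH : IsClosed (H : Set E)) {W : Submodule ℝ E} (hW : Disjoint W H.lineality) :
    ∃ ε > 0, ∀ x ∈ H, x ∈ W → ‖x‖ < ε → x = 0 := by
  by_contra! hsmall
  choose x hxH hxW hxε hx0 using fun k : ℕ ↦ hsmall (1 / (k + 1)) (by positivity)
  have hsphere : ∀ k, ‖x k‖⁻¹ • x k ∈ Metric.sphere (0 : E) 1 := fun k ↦ by
    simp [norm_smul, inv_mul_cancel₀ (norm_ne_zero_iff.2 (hx0 k))]
  obtain ⟨u, hu, φ, hφ, hlim⟩ := (isCompact_sphere (0 : E) 1).tendsto_subseq hsphere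
  have hxφ : Tendsto (x ∘ φ) atTop (𝓝 0) := by
    rw [tendsto_zero_iff_norm_tendsto_zero]
    exact squeeze_zero (fun _ ↦ norm_nonneg _) (fun k ↦ (hxε (φ k)).le)
      (tendsto_one_div_add_atTop_nhds_zero_nat.comp hφ.tendsto_atTop)
  have huW : u ∈ W := W.closed_of_finiteDimensional.mem_of_tendsto hlim
    (Eventually.of_forall fun k ↦ W.smul_mem _ (hxW _))
  have huV := mem_lineality_of_tendsto_normalize hH (fun k ↦ hxH (φ k)) (fun k ↦ hx0 (φ k)) hxφ hlim
  have : u = 0 := Submodule.disjoint_def.1 hW u huW huV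
  simp [this] at hu

end AddSubgroup

theorem not_exists_intCast_eq_half : ¬ ∃ m : ℤ, (1 / 2 : ℝ) = m := by
  rintro ⟨m, hm⟩
  have : (2 * m : ℤ) = 1 := by exact_mod_cast (by linarith : (2 : ℝ) * m = 1)
  omega

theorem Submodule.exists_integral_functional_of_notMem {F : Type*} [NormedAddCommGroup F]
    [NormedSpace ℝ F] [FiniteDimensional ℝ F] (L : Submodule ℤ F) [DiscreteTopology L] {w : F}
    (hw : w ∉ L) : ∃ f : F →ₗ[ℝ] ℝ, (∀ x ∈ L, ∃ m : ℤ, f x = m) ∧ ¬ ∃ m : ℤ, f w = m := by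
  set U := span ℝ (L : Set F)
  by_cases hwU : w ∈ U
  · set Lu := ZLattice.comap ℝ L U.subtype
    have : DiscreteTopology Lu :=
      ZLattice.comap_discreteTopology ℝ L continuous_subtype_val Subtype.val_injective
    have hLU : (L : Set F) ⊆ LinearMap.range U.subtype := by
      rw [range_subtype]
      exact subset_span
    have : IsZLattice ℝ Lu := ⟨by
      rw [ZLattice.coe_comap, span_preimage_eq L.nonempty hLU, comap_subtype_self]⟩
    set b := Module.Free.chooseBasis ℤ Lu
    set B := b.ofZLatticeBasis ℝ Lu
    obtain ⟨i, hi⟩ : ∃ i, ¬ ∃ m : ℤ, B.repr ⟨w, hwU⟩ i = m := by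
      by_contra! hint
      refine hw (?_ : ⟨w, hwU⟩ ∈ Lu)
      rw [← b.ofZLatticeBasis_span ℝ, B.mem_span_iff_repr_mem ℤ]
      exact fun i ↦ (hint i).imp fun m hm ↦ by simp [hm]
    obtain ⟨g, hg⟩ := LinearMap.exists_extend (B.coord i)
    have hgU : ∀ x (hx : x ∈ U), g x = B.repr ⟨x, hx⟩ i := fun x hx ↦ LinearMap.congr_fun hg ⟨x, hx⟩
    refine ⟨g, fun x hx ↦ ⟨b.repr ⟨⟨x, subset_span hx⟩, hx⟩ i, ?_⟩, by rwa [hgU w hwU]⟩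
    rw [hgU x (subset_span hx), ← b.ofZLatticeBasis_repr_apply ℝ]
  · obtain ⟨f, hfw, hfU⟩ := exists_dual_map_eq_bot_of_notMem hwU inferInstance
    have hfL : ∀ x ∈ L, f x = 0 := fun x hx ↦ by
      rw [← mem_bot ℝ, ← hfU]
      exact mem_map_of_mem (subset_span hx)
    refine ⟨(2 * f w)⁻¹ • f, fun x hx ↦ ⟨0, by simp [hfL x hx]⟩, ?_⟩
    convert not_exists_intCast_eq_half using 4
    rw [LinearMap.smul_apply, smul_eq_mul]
    field_simp

theorem IsClosed.exists_integral_functional_of_notMem {E : Type*} [NormedAddCommGroup E]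
    [NormedSpace ℝ E] [FiniteDimensional ℝ E] {H : AddSubgroup E} (hH : IsClosed (H : Set E))
    {ψ : E} (hψ : ψ ∉ H) : ∃ f : E →ₗ[ℝ] ℝ, (∀ x ∈ H, ∃ m : ℤ, f x = m) ∧ ¬ ∃ m : ℤ, f ψ = m := by
  obtain ⟨W, hVW⟩ := H.lineality.exists_isCompl
  obtain ⟨ε, hε, hsmall⟩ := H.exists_forall_mem_norm_lt_eq_zero hH hVW.symm.disjoint
  set L : Submodule ℤ E := (H ⊓ W.toAddSubgroup).toIntSubmodule
  have : DiscreteTopology L := by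
    refine discreteTopology_of_isOpen_singleton_zero ⟨Metric.ball 0 ε, Metric.isOpen_ball, ?_⟩
    ext ⟨x, hxH, hxW⟩
    simp only [Set.mem_preimage, mem_ball_zero_iff, Set.mem_singleton_iff]
    refine ⟨fun hx ↦ Subtype.ext (hsmall x hxH hxW hx), fun hx ↦ ?_⟩
    simpa [show x = 0 from congrArg Subtype.val hx] using hε
  set P := W.projection H.lineality hVW.symm
  have hsub : ∀ x, x - P x ∈ H :=
    fun x ↦ AddSubgroup.mem_of_mem_lineality (sub_projection_mem hVW.symm x)
  have hPL : ∀ x ∈ H, P x ∈ L := fun x hx ↦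
    ⟨sub_sub_cancel x (P x) ▸ H.sub_mem hx (hsub x), projection_apply_mem _ x⟩
  obtain ⟨g, hgL, hgψ⟩ := L.exists_integral_functional_of_notMem (w := P ψ) fun hPψ ↦
    hψ (sub_add_cancel ψ (P ψ) ▸ H.add_mem (hsub ψ) hPψ.1)
  exact ⟨g ∘ₗ P, fun x hx ↦ hgL _ (hPL x hx), hgψ⟩

def intPoints (ι : Type*) : AddSubgroup (ι → ℝ) := ((Int.castAddHom ℝ).compLeft ι).range

section Kronecker

variable {ι : Type*} [Fintype ι]

theorem exists_nat_le_norm_smul_sub_intCast_lt (θ : ι → ℝ) (M : ℕ) {δ : ℝ} (hδ : 0 < δ) :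
    ∃ N : ℕ, M ≤ N ∧ ∃ q : ι → ℤ, ‖(N : ℝ) • θ - (fun i ↦ (q i : ℝ))‖ < δ := by
  set r : ℕ → ι → ℝ := fun k i ↦ Int.fract ((k : ℝ) * θ i)
  have hr : ∀ k, r k ∈ Set.Icc (0 : ι → ℝ) 1 :=
    fun k ↦ ⟨fun i ↦ Int.fract_nonneg _, fun i ↦ (Int.fract_lt_one _).le⟩
  obtain ⟨_, -, φ, hφ, hlim⟩ := isCompact_Icc.tendsto_subseq hr
  obtain ⟨K, hK⟩ := Metric.cauchySeq_iff'.1 hlim.cauchySeq δ hδ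
  set a := φ K
  set b := φ (M + K)
  have hab : M + a ≤ b := hφ.add_le_nat M K
  refine ⟨b - a, by omega, fun i ↦ ⌊(b : ℝ) * θ i⌋ - ⌊(a : ℝ) * θ i⌋, ?_⟩
  have hdiff : ((b - a : ℕ) : ℝ) • θ - (fun i ↦ ((⌊(b : ℝ) * θ i⌋ - ⌊(a : ℝ) * θ i⌋ : ℤ) : ℝ))
      = r b - r a := by
    funext i
    simp only [r, Int.fract, Pi.sub_apply, Pi.smul_apply, smul_eq_mul, Int.cast_sub]
    push_cast [Nat.cast_sub (hab.trans' (Nat.le_add_left _ _))]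
    ring
  rw [hdiff, ← dist_eq_norm]
  exact hK (M + K) (by omega)

theorem mem_closure_zmultiples_sup_intPoints {θ ψ : ι → ℝ}
    (h : ∀ u : ι → ℤ, (∃ m : ℤ, ∑ i, (u i : ℝ) * θ i = m) → ∃ m : ℤ, ∑ i, (u i : ℝ) * ψ i = m) :
    ψ ∈ (AddSubgroup.zmultiples θ ⊔ intPoints ι).topologicalClosure := by
  classical
  set G := AddSubgroup.zmultiples θ ⊔ intPoints ι
  by_contra hψ
  obtain ⟨f, hfG, hfψ⟩ := G.isClosed_topologicalClosure.exists_integral_functional_of_notMem hψ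
  have hmem : ∀ x ∈ G, ∃ m : ℤ, f x = m := fun x hx ↦ hfG x (G.le_topologicalClosure hx)
  choose u hu using fun j ↦ hmem (fun i ↦ if j = i then 1 else 0)
    (AddSubgroup.mem_sup_right ⟨fun i ↦ if j = i then 1 else 0, by ext; simp⟩)
  have hf : ∀ y, f y = ∑ i, (u i : ℝ) * y i := fun y ↦ by
    simp only [f.pi_apply_eq_sum_univ y, hu, smul_eq_mul, mul_comm]
  obtain ⟨m, hm⟩ := h u (hf θ ▸ hmem θ (AddSubgroup.mem_sup_left (AddSubgroup.mem_zmultiples θ)))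
  exact hfψ ⟨m, by rw [hf, hm]⟩

theorem exists_nat_norm_smul_sub_intCast_sub_lt {θ ψ : ι → ℝ}
    (hψ : ψ ∈ (AddSubgroup.zmultiples θ ⊔ intPoints ι).topologicalClosure) {ε : ℝ}
    (hε : 0 < ε) : ∃ (n : ℕ) (p : ι → ℤ), ‖(n : ℝ) • θ - (fun i ↦ (p i : ℝ)) - ψ‖ < ε := by
  obtain ⟨y, hyG, hy⟩ := Metric.mem_closure_iff.1 hψ (ε / 2) (half_pos hε)
  obtain ⟨_, ⟨n₀, rfl⟩, _, ⟨q₀, rfl⟩, rfl⟩ := AddSubgroup.mem_sup.1 hyG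
  obtain ⟨N, hN, q, hq⟩ := exists_nat_le_norm_smul_sub_intCast_lt θ n₀.natAbs (half_pos hε)
  lift n₀ + N to ℕ using (by omega) with n hn
  refine ⟨n, q - q₀, ?_⟩
  have hsplit : (n : ℝ) • θ - (fun i ↦ ((q - q₀) i : ℝ)) - ψ
      = (n₀ • θ + (Int.castAddHom ℝ).compLeft ι q₀ - ψ) + ((N : ℝ) • θ - fun i ↦ (q i : ℝ)) := by
    have : (n : ℝ) = n₀ + N := by exact_mod_cast hn
    ext i
    simp only [this, Pi.sub_apply, Int.cast_sub, Pi.smul_apply, smul_eq_mul, add_mul, zsmul_eq_mul,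
      Pi.add_apply, Pi.mul_apply, Pi.intCast_apply, AddMonoidHom.compLeft_apply, Int.coe_castAddHom,
      Function.comp_apply]
    ring
  calc _ ≤ ‖n₀ • θ + (Int.castAddHom ℝ).compLeft ι q₀ - ψ‖ + ‖(N : ℝ) • θ - fun i ↦ (q i : ℝ)‖ :=
        hsplit ▸ norm_add_le _ _
    _ < ε / 2 + ε / 2 := by rw [← dist_eq_norm, dist_comm]; gcongr
    _ = ε := add_halves ε

end Kronecker

theorem kronecker_inhomogeneous (s : ℕ) (θ ψ : Fin s → ℝ)
    (h : ∀ u : Fin s → ℤ, (∃ m : ℤ, (∑ i, (u i : ℝ) * θ i) = m) →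
          ∃ m : ℤ, (∑ i, (u i : ℝ) * ψ i) = m) :
    ∀ ε : ℝ, 0 < ε → ∃ (p : Fin s → ℤ) (n : ℕ),
      ∀ i, |(n : ℝ) * θ i - p i - ψ i| ≤ ε := by
  intro ε hε
  obtain ⟨n, p, hnp⟩ :=
    exists_nat_norm_smul_sub_intCast_sub_lt (mem_closure_zmultiples_sup_intPoints h) hε
  exact ⟨p, n, fun i ↦ by simpa using (norm_le_pi_norm _ i).trans hnp.le⟩
end
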